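/- Let Φ(ρ) = Σ_{j=1}^r F_j ρ F_j† be a completely positive map on M_n and W ∈ M_{n,k} an isometry with P = W W† satisfying P F_i† F_j P = λ_{ij} P where Λ = [λ_{ij}] is positive semidefinite of rank q. Then there exist a unitary R ∈ M_n and a positive definite ξ ∈ M_q with q ≤ min{r, n/k} such that for every density matrix ρ̃ ∈ M_k, R† Φ(W ρ̃ W†) R = (ξ ⊗ ρ̃) ⊕ 0_{n-qk}. -/

import Mathlib

open Matrix Kronecker ComplexOrder

/-!
With `G_j = F_j W`, the Knill–Laflamme condition says `G_iᴴ G_j = λ_ij I_k`, i.e. the block row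
`K = [G_1 | ⋯ | G_r]` has Gram matrix `Kᴴ K = Λ ⊗ I_k`; in particular `Λ` is positive
semidefinite. Factor `Λ = Bᴴ B` with `B ∈ M_{q,r}` having a right inverse. Since
`Kᴴ K = (B ⊗ I)ᴴ (B ⊗ I)`, `K = V (B ⊗ I)` for an isometry `V ∈ M_{n,qk}` (so `qk ≤ n`), and
`Φ(W ρ Wᴴ) = K (I_r ⊗ ρ) Kᴴ = V (B Bᴴ ⊗ ρ) Vᴴ`. Completing the columns of `V` to a unitary `R`
gives the block form with `ξ = B Bᴴ`, which is positive definite because `B` has a right inverse.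
-/

namespace Matrix

variable {𝕜 : Type*} [RCLike 𝕜]

theorem conjTranspose_mul_mul_eq_smul_one_of_isometry {m k : Type*} [Fintype m] [Fintype k]
    [DecidableEq k] {W : Matrix m k 𝕜} (hW : Wᴴ * W = 1) {M : Matrix m m 𝕜} {c : 𝕜}
    (h : W * Wᴴ * M * (W * Wᴴ) = c • (W * Wᴴ)) : Wᴴ * M * W = c • 1 := by
  have := congr_arg (fun X => Wᴴ * X * W) h
  simp only [Matrix.mul_assoc, Matrix.mul_smul, Matrix.smul_mul] at this
  simpa only [← Matrix.mul_assoc, hW, Matrix.one_mul, Matrix.mul_one] using this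

def blockRow {α ι m k : Type*} (G : ι → Matrix m k α) : Matrix m (ι × k) α :=
  of fun i jc => G jc.1 i jc.2

theorem blockRow_mul_one_kronecker_mul_conjTranspose {α ι m k : Type*} [CommSemiring α]
    [StarRing α] [Fintype ι] [Fintype k] [DecidableEq ι] (G : ι → Matrix m k α)
    (ρ : Matrix k k α) :
    blockRow G * ((1 : Matrix ι ι α) ⊗ₖ ρ) * (blockRow G)ᴴ = ∑ j, G j * ρ * (G j)ᴴ := by
  ext i i'
  simp [blockRow, mul_apply, Fintype.sum_prod_type, one_apply, Matrix.sum_apply]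

theorem conjTranspose_blockRow_mul_blockRow {α ι m k : Type*} [CommSemiring α] [StarRing α]
    [Fintype m] [DecidableEq k] {G : ι → Matrix m k α} {Λ : Matrix ι ι α}
    (hG : ∀ i j, (G i)ᴴ * G j = Λ i j • 1) :
    (blockRow G)ᴴ * blockRow G = Λ ⊗ₖ (1 : Matrix k k α) := by
  ext ⟨i, c⟩ ⟨j, c'⟩
  simpa [blockRow, mul_apply] using congr_fun (congr_fun (hG i j) c) c'

theorem kronecker_one_mul_one_kronecker_mul_conjTranspose {ι μ k : Type*} [Fintype ι]
    [Fintype k] [DecidableEq ι] [DecidableEq k] (B : Matrix μ ι 𝕜) (ρ : Matrix k k 𝕜) :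
    B ⊗ₖ (1 : Matrix k k 𝕜) * ((1 : Matrix ι ι 𝕜) ⊗ₖ ρ) * (B ⊗ₖ (1 : Matrix k k 𝕜))ᴴ =
      (B * Bᴴ) ⊗ₖ ρ := by
  rw [conjTranspose_kronecker, conjTranspose_one, ← mul_kronecker_mul, ← mul_kronecker_mul,
    Matrix.mul_one, Matrix.one_mul, Matrix.mul_one]

theorem PosSemidef.of_kronecker_one {ι k : Type*} [DecidableEq k] [Nonempty k]
    {Λ : Matrix ι ι 𝕜} (h : (Λ ⊗ₖ (1 : Matrix k k 𝕜)).PosSemidef) : Λ.PosSemidef := by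
  obtain ⟨c⟩ := ‹Nonempty k›
  convert h.submatrix fun i => (i, c)
  ext
  simp

theorem PosSemidef.exists_rank_factorization {ι : Type*} [Fintype ι] [DecidableEq ι]
    {Λ : Matrix ι ι 𝕜} (hΛ : Λ.PosSemidef) :
    ∃ (B : Matrix (Fin Λ.rank) ι 𝕜) (B' : Matrix ι (Fin Λ.rank) 𝕜), Bᴴ * B = Λ ∧ B * B' = 1 := by
  set d := hΛ.isHermitian.eigenvalues
  set U : Matrix ι ι 𝕜 := (hΛ.isHermitian.eigenvectorUnitary : Matrix ι ι 𝕜)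
  let e : Fin Λ.rank ≃ {i // d i ≠ 0} :=
    (Fintype.equivFinOfCardEq hΛ.isHermitian.rank_eq_card_non_zero_eigs.symm).symm
  set τ : Fin Λ.rank → ι := fun a => (e a).1
  have hτ : Function.Injective τ := Subtype.val_injective.comp e.injective
  have hd_pos : ∀ a, 0 < d (τ a) := fun a => (hΛ.eigenvalues_nonneg _).lt_of_ne' (e a).2
  have hd_zero : ∀ i ∉ Set.range τ, d i = 0 := fun i hi => by
    by_contra h
    exact hi ⟨e.symm ⟨i, h⟩, by simp [τ]⟩
  set s : Fin Λ.rank → 𝕜 := fun a => ((√(d (τ a)) : ℝ) : 𝕜)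
  have hs : ∀ a, s a ≠ 0 := fun a => by simpa [s] using (Real.sqrt_pos.2 (hd_pos a)).ne'
  have hss : ∀ a, star (s a) * s a = d (τ a) := fun a => by
    simp [s, ← RCLike.ofReal_mul, Real.mul_self_sqrt (hd_pos a).le]
  refine ⟨diagonal s * (star U).submatrix τ id, U.submatrix id τ * diagonal fun a => (s a)⁻¹,
    ?_, ?_⟩
  · have hspec : Λ = U * diagonal (RCLike.ofReal ∘ d) * star U := by
      conv_lhs => rw [hΛ.isHermitian.spectral_theorem, Unitary.conjStarAlgAut_apply]
    refine Eq.trans ?_ hspec.symm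
    rw [conjTranspose_mul, conjTranspose_submatrix, diagonal_conjTranspose, Matrix.mul_assoc,
      ← Matrix.mul_assoc (diagonal _), diagonal_mul_diagonal, ← Matrix.mul_assoc]
    ext i j
    rw [mul_apply, mul_apply]
    simp only [mul_diagonal, submatrix_apply, id, conjTranspose_apply, star_apply, star_star,
      Function.comp_apply, Pi.star_apply, hss]
    exact Fintype.sum_of_injective τ hτ _ _ (fun m hm => by simp [hd_zero m hm]) fun _ => rfl
  · rw [Matrix.mul_assoc, ← Matrix.mul_assoc ((star U).submatrix τ id),
      ← submatrix_mul _ _ _ _ _ Function.bijective_id, Unitary.coe_star_mul_self,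
      submatrix_one _ hτ, Matrix.one_mul, diagonal_mul_diagonal]
    simp [hs]

theorem PosDef.mul_conjTranspose_self_of_mul_eq_one {ι μ : Type*} [Fintype ι] [Fintype μ]
    [DecidableEq μ] {B : Matrix μ ι 𝕜} {B' : Matrix ι μ 𝕜} (hB : B * B' = 1) :
    (B * Bᴴ).PosDef :=
  PosDef.mul_conjTranspose_self B fun x y hxy => by
    simpa [vecMul_vecMul, hB] using congr_arg (· ᵥ* B') hxy

theorem exists_isometry_mul_eq_of_conjTranspose_mul_self_eq {ι κ μ : Type*} [Fintype ι]
    [Fintype κ] [Fintype μ] [DecidableEq μ] {K : Matrix ι κ 𝕜} {B : Matrix μ κ 𝕜}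
    {B' : Matrix κ μ 𝕜} (hB : B * B' = 1) (hK : Kᴴ * K = Bᴴ * B) :
    ∃ V : Matrix ι μ 𝕜, Vᴴ * V = 1 ∧ K = V * B := by
  classical
  refine ⟨K * B', ?_, ?_⟩
  · rw [conjTranspose_mul, Matrix.mul_assoc, ← Matrix.mul_assoc Kᴴ, hK, Matrix.mul_assoc,
      hB, ← Matrix.mul_assoc, ← conjTranspose_mul, hB, conjTranspose_one, Matrix.mul_one]
  · -- `K (1 - B' B)` has the same Gram matrix as `B (1 - B' B) = 0`.
    have hB0 : B * (1 - B' * B) = 0 := by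
      rw [Matrix.mul_sub, Matrix.mul_one, ← Matrix.mul_assoc, hB, Matrix.one_mul, sub_self]
    have hK0 : (K * (1 - B' * B))ᴴ * (K * (1 - B' * B)) = 0 := by
      rw [conjTranspose_mul, Matrix.mul_assoc, ← Matrix.mul_assoc Kᴴ, hK, Matrix.mul_assoc,
        hB0, Matrix.mul_zero, Matrix.mul_zero]
    rwa [conjTranspose_mul_self_eq_zero, Matrix.mul_sub, Matrix.mul_one, ← Matrix.mul_assoc,
      sub_eq_zero] at hK0

theorem exists_isometry_eq_mul_kronecker_one {ι κ μ k : Type*} [Fintype ι] [Fintype κ]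
    [Fintype μ] [Fintype k] [DecidableEq μ] [DecidableEq k]
    {K : Matrix ι (κ × k) 𝕜} {Λ : Matrix κ κ 𝕜} {B : Matrix μ κ 𝕜} {B' : Matrix κ μ 𝕜}
    (hK : Kᴴ * K = Λ ⊗ₖ (1 : Matrix k k 𝕜)) (hBΛ : Bᴴ * B = Λ) (hB : B * B' = 1) :
    ∃ V : Matrix ι (μ × k) 𝕜, Vᴴ * V = 1 ∧ K = V * (B ⊗ₖ (1 : Matrix k k 𝕜)) :=
  exists_isometry_mul_eq_of_conjTranspose_mul_self_eq (B' := B' ⊗ₖ 1)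
    (by rw [← mul_kronecker_mul, hB, Matrix.mul_one, one_kronecker_one])
    (by rw [hK, conjTranspose_kronecker, ← mul_kronecker_mul, hBΛ, conjTranspose_one,
      Matrix.mul_one])

theorem card_le_card_of_conjTranspose_mul_self_eq_one {ι m : Type*} [Fintype ι] [Fintype m]
    [DecidableEq m] {V : Matrix ι m 𝕜} (hV : Vᴴ * V = 1) : Fintype.card m ≤ Fintype.card ι :=
  calc Fintype.card m = (Vᴴ * V).rank := by rw [hV, rank_one]
    _ ≤ V.rank := rank_mul_le_right _ _
    _ ≤ Fintype.card ι := rank_le_card_height V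

theorem exists_unitary_submatrix_eq_of_isometry {ι m : Type*} [Fintype ι] [DecidableEq ι]
    [Fintype m] [DecidableEq m] {f : m → ι} (hf : Function.Injective f) {V : Matrix ι m 𝕜}
    (hV : Vᴴ * V = 1) : ∃ R ∈ unitaryGroup ι 𝕜, R.submatrix id f = V := by
  set v : ι → EuclideanSpace 𝕜 ι := Function.extend f (fun a => WithLp.toLp 2 (Vᵀ a)) 0
  have hv : ∀ a, v (f a) = WithLp.toLp 2 (Vᵀ a) := fun a => hf.extend_apply _ _ a
  have hon : Orthonormal 𝕜 ((Set.range f).domRestrict v) := by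
    rw [orthonormal_iff_ite]
    rintro ⟨_, a, rfl⟩ ⟨_, b, rfl⟩
    dsimp only [Set.domRestrict_apply]
    rw [hv, hv, EuclideanSpace.inner_toLp_toLp]
    simpa [mul_apply, one_apply, dotProduct, Subtype.ext_iff, hf.eq_iff, mul_comm] using
      congr_fun (congr_fun hV a) b
  obtain ⟨b, hb⟩ := hon.exists_orthonormalBasis_extension_of_card_eq (by simp)
  refine ⟨(EuclideanSpace.basisFun ι 𝕜).toBasis.toMatrix b,
    (EuclideanSpace.basisFun ι 𝕜).toMatrix_orthonormalBasis_mem_unitary b, ?_⟩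
  ext i a
  simp [Module.Basis.toMatrix_apply, hb _ ⟨a, rfl⟩, hv]

theorem unitaryGroup_conj_columns_eq_fromBlocks {ι m p : Type*} [Fintype ι] [DecidableEq ι]
    [Fintype m] (e : m ⊕ p ≃ ι) {R : Matrix ι ι 𝕜} (hR : R ∈ unitaryGroup ι 𝕜)
    (X : Matrix m m 𝕜) :
    Rᴴ * (R.submatrix id (e ∘ Sum.inl) * X * (R.submatrix id (e ∘ Sum.inl))ᴴ) * R =
      (fromBlocks X 0 0 (0 : Matrix p p 𝕜)).submatrix e.symm e.symm := by
  classical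
  set J := R.submatrix id (e ∘ Sum.inl)
  have hRJ : Rᴴ * J = (1 : Matrix ι ι 𝕜).submatrix id (e ∘ Sum.inl) := by
    rw [← mem_unitaryGroup_iff'.1 hR, submatrix_mul _ _ _ id _ Function.bijective_id,
      submatrix_id_id, star_eq_conjTranspose]
  calc Rᴴ * (J * X * Jᴴ) * R = (Rᴴ * J) * X * (Rᴴ * J)ᴴ := by
        simp only [conjTranspose_mul, conjTranspose_conjTranspose, Matrix.mul_assoc]
    _ = _ := by
        rw [hRJ]
        ext i j
        obtain ⟨u, rfl⟩ := e.surjective i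
        obtain ⟨u', rfl⟩ := e.surjective j
        rcases u with a | x <;> rcases u' with b | y <;> simp [mul_apply, one_apply]

end Matrix

/-- main theorem: If the Knill–Laflamme condition holds with matrix `Λ` of
rank `q`, then `q ≤ min {r, n/k}` and there are a unitary `R ∈ M_n` and a positive
definite `ξ ∈ M_q` such that for every density matrix `ρ̃ ∈ M_k`,
`Rᴴ Φ(W ρ̃ Wᴴ) R = (ξ ⊗ ρ̃) ⊕ 0_{n-qk}`. -/
theorem main_theorem (n k r q : ℕ) (hk : 1 ≤ k)
    (F : Fin r → Matrix (Fin n) (Fin n) ℂ)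
    (W : Matrix (Fin n) (Fin k) ℂ) (hW : Wᴴ * W = 1)
    (P : Matrix (Fin n) (Fin n) ℂ) (hP : P = W * Wᴴ)
    (Λ : Matrix (Fin r) (Fin r) ℂ)
    (hKL : ∀ i j, P * (F i)ᴴ * F j * P = Λ i j • P)
    (hrank : Λ.rank = q) :
    q ≤ r ∧ q ≤ n / k ∧
    ∃ (hqk : q * k ≤ n) (R : Matrix (Fin n) (Fin n) ℂ) (ξ : Matrix (Fin q) (Fin q) ℂ),
      R ∈ Matrix.unitaryGroup (Fin n) ℂ ∧ ξ.PosDef ∧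
      ∀ ρtil : Matrix (Fin k) (Fin k) ℂ, ρtil.PosSemidef → ρtil.trace = 1 →
        Rᴴ * (∑ j, F j * (W * ρtil * Wᴴ) * (F j)ᴴ) * R =
          (Matrix.fromBlocks (ξ ⊗ₖ ρtil) 0 0
              (0 : Matrix (Fin (n - q * k)) (Fin (n - q * k)) ℂ)).submatrix
            (((Equiv.sumCongr finProdFinEquiv (Equiv.refl (Fin (n - q * k)))).trans
              (finSumFinEquiv.trans (finCongr (Nat.add_sub_cancel' hqk)))).symm)
            (((Equiv.sumCongr finProdFinEquiv (Equiv.refl (Fin (n - q * k)))).trans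
              (finSumFinEquiv.trans (finCongr (Nat.add_sub_cancel' hqk)))).symm) := by
  subst hrank
  set G : Fin r → Matrix (Fin n) (Fin k) ℂ := fun j => F j * W
  have hK : (blockRow G)ᴴ * blockRow G = Λ ⊗ₖ (1 : Matrix (Fin k) (Fin k) ℂ) :=
    conjTranspose_blockRow_mul_blockRow fun i j => by
      simpa only [G, conjTranspose_mul, Matrix.mul_assoc] using
        conjTranspose_mul_mul_eq_smul_one_of_isometry hW (M := (F i)ᴴ * F j)
          (by simpa only [hP, Matrix.mul_assoc] using hKL i j)
  have : Nonempty (Fin k) := ⟨⟨0, hk⟩⟩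
  have hΛ : Λ.PosSemidef := PosSemidef.of_kronecker_one (hK ▸ posSemidef_conjTranspose_mul_self _)
  obtain ⟨B, B', hBΛ, hBB'⟩ := hΛ.exists_rank_factorization
  obtain ⟨V, hV, hKV⟩ := exists_isometry_eq_mul_kronecker_one hK hBΛ hBB'
  have hqk : Λ.rank * k ≤ n := by simpa using card_le_card_of_conjTranspose_mul_self_eq_one hV
  set ε := (Equiv.sumCongr finProdFinEquiv (Equiv.refl (Fin (n - Λ.rank * k)))).trans
    (finSumFinEquiv.trans (finCongr (Nat.add_sub_cancel' hqk)))
  obtain ⟨R, hR, hRV⟩ := exists_unitary_submatrix_eq_of_isometry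
    (ε.injective.comp Sum.inl_injective) hV
  refine ⟨rank_le_width Λ, (Nat.le_div_iff_mul_le hk).2 hqk, hqk, R, B * Bᴴ, hR,
    PosDef.mul_conjTranspose_self_of_mul_eq_one hBB', fun ρ _ _ => ?_⟩
  have hΦ : ∑ j, F j * (W * ρ * Wᴴ) * (F j)ᴴ = V * ((B * Bᴴ) ⊗ₖ ρ) * Vᴴ := by
    rw [← kronecker_one_mul_one_kronecker_mul_conjTranspose]
    simpa only [G, hKV, conjTranspose_mul, Matrix.mul_assoc] using
      (blockRow_mul_one_kronecker_mul_conjTranspose G ρ).symm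
  rw [hΦ, ← hRV]
  exact unitaryGroup_conj_columns_eq_fromBlocks ε hR _
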